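/- Let $X$ be an INAR(1) process with parameter $1 - h/n^2$, $h \ge 0$, $X_0 = 0$, innovations with pmf $g$, mean $\mu_G$, and finite variance. Then the estimator $\hat{g}_n(0) = \frac{1}{n} \sum_{t=1}^n \mathbf{1}\{X_t = X_{t-1}\}$ converges in probability to $g(0)$ under $\mathbb{P}_{1-h/n^2}$ as $n \to \infty$. -/

import Mathlib

open MeasureTheory ProbabilityTheory Filter Finset

/-- An INAR(1) process with autoregression parameter `θ` and innovation
distribution `G` on `ℕ`, defined on the probability space `(Ω, P)`:
`X 0 = 0` and `X (t+1) = θ ∘ X t + ε (t+1)`, where the binomial thinning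
`θ ∘ X t` is the sum of `X t` i.i.d. Bernoulli(θ) variables `Z (t+1) j`,
all thinning variables and innovations being jointly independent. -/
structure INAR {Ω : Type} [MeasurableSpace Ω] (P : Measure Ω)
    (θ : ℝ) (G : PMF ℕ) where
  Z : ℕ → ℕ → Ω → ℕ
  ε : ℕ → Ω → ℕ
  X : ℕ → Ω → ℕ
  hZmeas : ∀ t j, Measurable (Z t j)
  hεmeas : ∀ t, Measurable (ε t)
  hZle : ∀ t j ω, Z t j ω ≤ 1
  hZdist : ∀ t j, P {ω | Z t j ω = 1} = ENNReal.ofReal θ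
  hεdist : ∀ t k, P {ω | ε t ω = k} = G k
  hIndep : iIndepFun
      (Sum.elim (fun p : ℕ × ℕ => Z p.1 p.2) ε) P
  hX0 : ∀ ω, X 0 ω = 0
  hXrec : ∀ t ω, X (t + 1) ω =
      (∑ j ∈ Finset.range (X t ω), Z (t + 1) j ω) + ε (t + 1) ω

open scoped ENNReal

/-!
Write `D t` for the number of thinning failures ("deaths") in the step `t → t + 1`. Then
`X (t + 1) + D t = X t + ε (t + 1)`, so `1{X (t + 1) = X t}` and `1{ε (t + 1) = 0}` differ by at
most `D t`. The frequency of `{ε t = 0}` concentrates at `g 0` by Chebyshev's inequality, the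
indicators being pairwise independent. Since `X t` is independent of the thinning variables of the
next step, `E (D t) = (1 - θ) E (X t) ≤ (h / n²) n μ_G`, and Markov's inequality makes the
averaged deaths negligible. Both error probabilities are `O(1 / n)`.
-/

theorem sum_range_eq_tsum_ite {M : Type*} [AddCommMonoid M] [TopologicalSpace M] (n : ℕ)
    (f : ℕ → M) : ∑ j ∈ range n, f j = ∑' j, if j < n then f j else 0 := by
  rw [tsum_eq_sum (s := range n) fun j hj => if_neg (by simpa using hj)]
  exact sum_congr rfl fun j hj => (if_pos (mem_range.mp hj)).symm

theorem Measurable.apply_of_nat {α β : Type*} {mα : MeasurableSpace α} [MeasurableSpace β]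
    {N : α → ℕ} (hN : Measurable N) {g : ℕ → α → β} (hg : ∀ k, Measurable (g k)) :
    Measurable fun a => g (N a) a :=
  (measurable_from_prod_countable_left (f := fun q : α × ℕ => g q.2 q.1) hg).comp
    (measurable_id.prodMk hN)

section

variable {Ω : Type*} [MeasurableSpace Ω] {P : Measure Ω}

theorem lintegral_natCast_eq_tsum_measure_lt {f : Ω → ℕ} (hf : Measurable f) :
    ∫⁻ ω, (f ω : ℝ≥0∞) ∂P = ∑' j : ℕ, P {ω | j < f ω} := by
  have hmeas (j : ℕ) : MeasurableSet {ω | j < f ω} :=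
    hf (measurableSet_lt measurable_const measurable_id)
  calc ∫⁻ ω, (f ω : ℝ≥0∞) ∂P = ∫⁻ ω, ∑' j : ℕ, {ω | j < f ω}.indicator 1 ω ∂P := by
        congr! 2 with ω
        simpa [Set.indicator_apply] using sum_range_eq_tsum_ite (f ω) (fun _ => (1 : ℝ≥0∞))
    _ = ∑' j : ℕ, P {ω | j < f ω} := by
        rw [lintegral_tsum fun j => (measurable_one.indicator (hmeas j)).aemeasurable]
        exact tsum_congr fun j => lintegral_indicator_one (hmeas j)

theorem measureReal_abs_sub_ge_le_add [IsFiniteMeasure P] {A B D : Ω → ℝ}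
    (hAB : ∀ ω, |A ω - B ω| ≤ D ω) (c δ : ℝ) :
    P.real {ω | δ ≤ |A ω - c|} ≤ P.real {ω | δ / 2 ≤ |B ω - c|} + P.real {ω | δ / 2 ≤ D ω} := by
  refine (measureReal_mono fun ω (hω : δ ≤ |A ω - c|) => ?_).trans (measureReal_union_le _ _)
  by_contra! hω'
  simp only [Set.mem_union, Set.mem_ofPred_eq, not_or, not_le] at hω'
  have := abs_sub_le (A ω) (B ω) c
  linarith [hAB ω]

theorem measureReal_ge_le_div_of_lintegral_le {f : Ω → ℝ} (hf : AEMeasurable f P) {b c : ℝ}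
    (hb : 0 ≤ b) (hc : 0 < c) (hfb : ∫⁻ ω, ENNReal.ofReal (f ω) ∂P ≤ ENNReal.ofReal b) :
    P.real {ω | c ≤ f ω} ≤ b / c := by
  refine ENNReal.toReal_le_of_le_ofReal (div_nonneg hb hc.le) ?_
  calc P {ω | c ≤ f ω} ≤ P {ω | ENNReal.ofReal c ≤ ENNReal.ofReal (f ω)} :=
        measure_mono fun ω hω => ENNReal.ofReal_le_ofReal hω
    _ ≤ (∫⁻ ω, ENNReal.ofReal (f ω) ∂P) / ENNReal.ofReal c :=
        meas_ge_le_lintegral_div hf.ennreal_ofReal (by simpa using hc) ENNReal.ofReal_ne_top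
    _ ≤ ENNReal.ofReal (b / c) := by
        rw [ENNReal.ofReal_div_of_pos hc]
        gcongr

theorem measureReal_abs_mean_sub_ge_le [IsProbabilityMeasure P] {ι : Type*} {s : Finset ι}
    (hs : s.Nonempty) {Y : ι → Ω → ℝ} {p c : ℝ} (hc : 0 < c)
    (hY : ∀ i ∈ s, AEMeasurable (Y i) P) (hY01 : ∀ i ∈ s, ∀ ω, Y i ω ∈ Set.Icc 0 1)
    (hmean : ∀ i ∈ s, P[Y i] = p) (hind : Set.Pairwise s fun i j => Y i ⟂ᵢ[P] Y j) :
    P.real {ω | c ≤ |(#s : ℝ)⁻¹ * ∑ i ∈ s, Y i ω - p|} ≤ 1 / (4 * #s * c ^ 2) := by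
  have hL2 : ∀ i ∈ s, MemLp (Y i) 2 P := fun i hi =>
    memLp_of_bounded (ae_of_all _ (hY01 i hi)) (hY i hi).aestronglyMeasurable 2
  have hmean_avg : P[fun ω => (#s : ℝ)⁻¹ * ∑ i ∈ s, Y i ω] = p := by
    rw [integral_const_mul, integral_finsetSum _ fun i hi => (hL2 i hi).integrable one_le_two,
      sum_congr rfl hmean, sum_const, nsmul_eq_mul]
    field_simp
  have hvar : variance (fun ω => (#s : ℝ)⁻¹ * ∑ i ∈ s, Y i ω) P ≤ 1 / (4 * #s) := by
    have hvar_sum : variance (∑ i ∈ s, Y i) P ≤ #s * (1 / 4) := by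
      rw [IndepFun.variance_sum hL2 hind, ← nsmul_eq_mul, ← sum_const]
      refine sum_le_sum fun i hi => ?_
      exact (variance_le_sq_of_bounded (ae_of_all _ (hY01 i hi)) (hY i hi)).trans_eq (by norm_num)
    simp_rw [variance_const_mul, ← Finset.sum_apply]
    calc ((#s : ℝ)⁻¹) ^ 2 * variance (∑ i ∈ s, Y i) P
        ≤ ((#s : ℝ)⁻¹) ^ 2 * ((#s : ℝ) * (1 / 4)) := by gcongr
      _ = 1 / (4 * (#s : ℝ)) := by field_simp
  have hcheb := meas_ge_le_variance_div_sq ((memLp_finsetSum s hL2).const_mul (#s : ℝ)⁻¹) hc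
  rw [hmean_avg] at hcheb
  refine ENNReal.toReal_le_of_le_ofReal (by positivity) (hcheb.trans (ENNReal.ofReal_le_ofReal ?_))
  calc variance _ P / c ^ 2 ≤ 1 / (4 * #s) / c ^ 2 := by gcongr
    _ = 1 / (4 * #s * c ^ 2) := by rw [div_div]

end

namespace INAR

variable {Ω : Type} [MeasurableSpace Ω] {P : Measure Ω} {θ μG : ℝ} {G : PMF ℕ} (M : INAR P θ G)

def driver : (ℕ × ℕ) ⊕ ℕ → Ω → ℕ :=
  Sum.elim (fun p => M.Z p.1 p.2) M.ε

theorem measurable_driver (i : (ℕ × ℕ) ⊕ ℕ) : Measurable (M.driver i) := by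
  cases i with
  | inl p => exact M.hZmeas p.1 p.2
  | inr s => exact M.hεmeas s

def pastIndices (t : ℕ) : Set ((ℕ × ℕ) ⊕ ℕ) :=
  {i | Sum.elim (fun p => p.1 ≤ t) (· ≤ t) i}

abbrev past (t : ℕ) : MeasurableSpace Ω :=
  ⨆ i ∈ pastIndices t, MeasurableSpace.comap (M.driver i) inferInstance

theorem comap_driver_le_past {t : ℕ} {i : (ℕ × ℕ) ⊕ ℕ} (hi : i ∈ pastIndices t) :
    MeasurableSpace.comap (M.driver i) inferInstance ≤ M.past t :=
  le_biSup (fun i => MeasurableSpace.comap (M.driver i) inferInstance) hi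

theorem past_mono {s t : ℕ} (hst : s ≤ t) : M.past s ≤ M.past t :=
  biSup_mono fun i hi => by
    rcases i with ⟨r, j⟩ | r <;> exact le_trans (b := s) hi hst

theorem measurable_X_past (t : ℕ) : Measurable[M.past t] (M.X t) := by
  induction t with
  | zero => simp only [funext M.hX0]; exact measurable_const
  | succ t ih =>
    have hZ (j : ℕ) : Measurable[M.past (t + 1)] (M.Z (t + 1) j) := measurable_iff_comap_le.mpr
      (M.comap_driver_le_past (i := .inl (t + 1, j)) (by simp [pastIndices]))
    have hε : Measurable[M.past (t + 1)] (M.ε (t + 1)) := measurable_iff_comap_le.mpr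
      (M.comap_driver_le_past (i := .inr (t + 1)) (by simp [pastIndices]))
    rw [funext (M.hXrec t)]
    exact (ih.mono (M.past_mono t.le_succ) le_rfl).apply_of_nat
      (g := fun k ω => (∑ j ∈ range k, M.Z (t + 1) j ω) + M.ε (t + 1) ω)
      fun k => (Finset.measurable_sum _ fun j _ => hZ j).add hε

theorem past_le (t : ℕ) : M.past t ≤ ‹MeasurableSpace Ω› :=
  iSup₂_le fun i _ => measurable_iff_comap_le.mp (M.measurable_driver i)

theorem measurable_X (t : ℕ) : Measurable (M.X t) :=
  (M.measurable_X_past t).mono (M.past_le t) le_rfl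

theorem indepFun_X_Z (t j : ℕ) : IndepFun (M.X t) (M.Z (t + 1) j) P := by
  have hpast : Indep (M.past t)
      (⨆ i ∈ (pastIndices t)ᶜ, MeasurableSpace.comap (M.driver i) inferInstance) P :=
    indep_biSup_compl (fun i => measurable_iff_comap_le.mp (M.measurable_driver i))
      M.hIndep.iIndep (pastIndices t)
  have hfuture : Sum.inl (t + 1, j) ∈ (pastIndices t)ᶜ := by
    simp [pastIndices]
  exact indep_of_indep_of_le_right (indep_of_indep_of_le_left hpast
    (measurable_iff_comap_le.mp (M.measurable_X_past t)))
    (le_biSup (fun i => MeasurableSpace.comap (M.driver i) inferInstance) hfuture)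

def deaths (t : ℕ) (ω : Ω) : ℕ :=
  ∑ j ∈ range (M.X t ω), (1 - M.Z (t + 1) j ω)

theorem measurable_deaths (t : ℕ) : Measurable (M.deaths t) :=
  (M.measurable_X t).apply_of_nat fun _ => Finset.measurable_sum _ fun j _ =>
    (measurable_from_top (f := fun m : ℕ => 1 - m)).comp (M.hZmeas (t + 1) j)

theorem X_succ_add_deaths (t : ℕ) (ω : Ω) :
    M.X (t + 1) ω + M.deaths t ω = M.X t ω + M.ε (t + 1) ω := by
  have hsurvive_add_die : ∑ j ∈ range (M.X t ω), M.Z (t + 1) j ω + M.deaths t ω = M.X t ω := by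
    have hunit (j : ℕ) : M.Z (t + 1) j ω + (1 - M.Z (t + 1) j ω) = 1 := by
      have := M.hZle (t + 1) j ω; omega
    rw [deaths, ← sum_add_distrib, sum_congr rfl fun j _ => hunit j, sum_const, card_range,
      smul_eq_mul, mul_one]
  rw [M.hXrec t ω]
  omega

theorem abs_ite_sub_ite_le_deaths (t : ℕ) (ω : Ω) :
    |(if M.X (t + 1) ω = M.X t ω then (1 : ℝ) else 0) -
      (if M.ε (t + 1) ω = 0 then (1 : ℝ) else 0)| ≤ M.deaths t ω := by
  have hbal := M.X_succ_add_deaths t ω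
  rcases Nat.eq_zero_or_pos (M.deaths t ω) with hD | hD
  · have hiff : M.X (t + 1) ω = M.X t ω ↔ M.ε (t + 1) ω = 0 := by omega
    simp [hiff, hD]
  · have hD' : (1 : ℝ) ≤ M.deaths t ω := by exact_mod_cast hD
    split_ifs <;> norm_num <;> linarith

theorem lintegral_ε (hμ : HasSum (fun k : ℕ => (k : ℝ) * (G k).toReal) μG) (t : ℕ) :
    ∫⁻ ω, (M.ε t ω : ℝ≥0∞) ∂P = ENNReal.ofReal μG := by
  rw [← lintegral_map (f := fun k : ℕ => (k : ℝ≥0∞)) measurable_from_top (M.hεmeas t),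
    lintegral_countable', ← hμ.tsum_eq, ENNReal.ofReal_tsum_of_nonneg
      (fun k => by positivity) hμ.summable]
  refine tsum_congr fun k => ?_
  rw [Measure.map_apply (M.hεmeas t) (measurableSet_singleton k),
    ENNReal.ofReal_mul (by positivity), ENNReal.ofReal_natCast,
    ENNReal.ofReal_toReal (G.apply_lt_top k).ne, ← M.hεdist t k]
  rfl

theorem lintegral_X_le (hμ : HasSum (fun k : ℕ => (k : ℝ) * (G k).toReal) μG) (t : ℕ) :
    ∫⁻ ω, (M.X t ω : ℝ≥0∞) ∂P ≤ t * ENNReal.ofReal μG := by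
  induction t with
  | zero => simp [M.hX0]
  | succ t ih =>
    calc ∫⁻ ω, (M.X (t + 1) ω : ℝ≥0∞) ∂P
        ≤ ∫⁻ ω, ((M.X t ω : ℝ≥0∞) + M.ε (t + 1) ω) ∂P := lintegral_mono fun ω => by
          have := M.X_succ_add_deaths t ω
          rw [← Nat.cast_add]
          exact Nat.mono_cast (by omega)
      _ = ∫⁻ ω, (M.X t ω : ℝ≥0∞) ∂P + ∫⁻ ω, (M.ε (t + 1) ω : ℝ≥0∞) ∂P :=
          lintegral_add_left (measurable_from_top.comp (M.measurable_X t)) _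
      _ ≤ (t + 1 : ℕ) * ENNReal.ofReal μG := by
          rw [M.lintegral_ε hμ]
          push_cast
          rw [add_mul, one_mul]
          gcongr

theorem measure_Z_eq_zero [IsProbabilityMeasure P] (t j : ℕ) :
    P {ω | M.Z t j ω = 0} = 1 - ENNReal.ofReal θ := by
  have hcompl : {ω | M.Z t j ω = 0} = {ω | M.Z t j ω = 1}ᶜ := by
    ext ω
    have := M.hZle t j ω
    simp only [Set.mem_ofPred_eq, Set.mem_compl_iff]
    omega
  rw [hcompl, prob_compl_eq_one_sub (s := {ω | M.Z t j ω = 1})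
    (M.hZmeas t j (measurableSet_singleton 1)), M.hZdist t j]

theorem lintegral_deaths [IsProbabilityMeasure P] (t : ℕ) :
    ∫⁻ ω, (M.deaths t ω : ℝ≥0∞) ∂P =
      (1 - ENNReal.ofReal θ) * ∫⁻ ω, (M.X t ω : ℝ≥0∞) ∂P := by
  set A : ℕ → Set Ω := fun j => {ω | j < M.X t ω} ∩ {ω | M.Z (t + 1) j ω = 0}
  have hA (j : ℕ) : MeasurableSet (A j) :=
    (M.measurable_X t (measurableSet_lt measurable_const measurable_id)).inter
      (M.hZmeas (t + 1) j (measurableSet_singleton 0))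
  have hdeaths (ω : Ω) : (M.deaths t ω : ℝ≥0∞) = ∑' j, (A j).indicator 1 ω := by
    rw [deaths, Nat.cast_sum, sum_range_eq_tsum_ite]
    refine tsum_congr fun j => ?_
    rcases Nat.le_one_iff_eq_zero_or_eq_one.mp (M.hZle (t + 1) j ω) with hZ | hZ <;>
      by_cases hj : j < M.X t ω <;> simp [A, hZ, hj]
  calc ∫⁻ ω, (M.deaths t ω : ℝ≥0∞) ∂P = ∑' j, P (A j) := by
        simp_rw [hdeaths]
        rw [lintegral_tsum fun j => (measurable_one.indicator (hA j)).aemeasurable]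
        exact tsum_congr fun j => lintegral_indicator_one (hA j)
    _ = ∑' j, P {ω | j < M.X t ω} * (1 - ENNReal.ofReal θ) := tsum_congr fun j => by
        rw [← M.measure_Z_eq_zero (t + 1) j]
        exact (M.indepFun_X_Z t j).measure_inter_preimage_eq_mul _ _
          (measurableSet_lt measurable_const measurable_id) (measurableSet_singleton 0)
    _ = (1 - ENNReal.ofReal θ) * ∫⁻ ω, (M.X t ω : ℝ≥0∞) ∂P := by
        rw [ENNReal.tsum_mul_right, lintegral_natCast_eq_tsum_measure_lt (M.measurable_X t),
          mul_comm]

theorem lintegral_deaths_le [IsProbabilityMeasure P]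
    (hμ : HasSum (fun k : ℕ => (k : ℝ) * (G k).toReal) μG) (hθ : θ ≤ 1) (t : ℕ) :
    ∫⁻ ω, (M.deaths t ω : ℝ≥0∞) ∂P ≤ ENNReal.ofReal ((1 - θ) * (t * μG)) := by
  have hthin : 1 - ENNReal.ofReal θ ≤ ENNReal.ofReal (1 - θ) := by
    refine tsub_le_iff_right.mpr ?_
    rw [← ENNReal.ofReal_one]
    exact (ENNReal.ofReal_le_ofReal (by linarith)).trans ENNReal.ofReal_add_le
  rw [M.lintegral_deaths, ENNReal.ofReal_mul (by linarith), ENNReal.ofReal_mul (by positivity),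
    ENNReal.ofReal_natCast]
  exact mul_le_mul' hthin (M.lintegral_X_le hμ t)

theorem abs_mean_sub_mean_le_mean_deaths (n : ℕ) (ω : Ω) :
    |1 / (n : ℝ) * ∑ t ∈ Icc 1 n, (if M.X t ω = M.X (t - 1) ω then (1 : ℝ) else 0) -
        1 / (n : ℝ) * ∑ t ∈ Icc 1 n, (if M.ε t ω = 0 then (1 : ℝ) else 0)| ≤
      1 / (n : ℝ) * ∑ t ∈ Icc 1 n, (M.deaths (t - 1) ω : ℝ) := by
  rw [← mul_sub, abs_mul, abs_of_nonneg (by positivity), ← sum_sub_distrib]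
  gcongr
  refine (abs_sum_le_sum_abs _ _).trans (sum_le_sum fun t ht => ?_)
  obtain ⟨s, rfl⟩ : ∃ s, t = s + 1 := ⟨t - 1, by grind⟩
  exact M.abs_ite_sub_ite_le_deaths s ω

theorem measureReal_abs_mean_innovation_zero_sub_ge_le [IsProbabilityMeasure P] {n : ℕ}
    (hn : 1 ≤ n) {c : ℝ} (hc : 0 < c) :
    P.real {ω | c ≤ |1 / (n : ℝ) * ∑ t ∈ Icc 1 n, (if M.ε t ω = 0 then (1 : ℝ) else 0) -
      (G 0).toReal|} ≤ 1 / (4 * n * c ^ 2) := by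
  have hind (t : ℕ) : (fun ω => if M.ε t ω = 0 then (1 : ℝ) else 0) =
      {ω | M.ε t ω = 0}.indicator 1 := by
    ext ω
    simp [Set.indicator_apply]
  have hmeas (t : ℕ) : MeasurableSet {ω | M.ε t ω = 0} :=
    M.hεmeas t (measurableSet_singleton 0)
  have h := measureReal_abs_mean_sub_ge_le (s := Icc 1 n) (P := P) (p := (G 0).toReal)
    (Y := fun t ω => if M.ε t ω = 0 then (1 : ℝ) else 0) ⟨1, by simp [hn]⟩ hc
    (fun t _ => by rw [hind]; exact (measurable_one.indicator (hmeas t)).aemeasurable)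
    (fun t _ ω => by split_ifs <;> simp)
    (fun t _ => by rw [hind, integral_indicator_one (hmeas t), measureReal_def, M.hεdist t 0])
    (fun s _ t _ hst => (M.hIndep.indepFun (i := .inr s) (j := .inr t) (by simpa using hst)).comp
      (φ := fun k => if k = 0 then (1 : ℝ) else 0) (ψ := fun k => if k = 0 then (1 : ℝ) else 0)
      measurable_from_top measurable_from_top)
  simpa using h

theorem lintegral_mean_deaths_le [IsProbabilityMeasure P]
    (hμ : HasSum (fun k : ℕ => (k : ℝ) * (G k).toReal) μG) (hθ : θ ≤ 1) (n : ℕ) :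
    ∫⁻ ω, ENNReal.ofReal (1 / (n : ℝ) * ∑ t ∈ Icc 1 n, (M.deaths (t - 1) ω : ℝ)) ∂P ≤
      ENNReal.ofReal ((1 - θ) * (n * μG)) := by
  have hμG : 0 ≤ μG := hμ.nonneg fun k => by positivity
  have hmeas (t : ℕ) : Measurable fun ω => (M.deaths t ω : ℝ≥0∞) :=
    measurable_from_top.comp (M.measurable_deaths t)
  have hpt (ω : Ω) : ENNReal.ofReal (1 / (n : ℝ) * ∑ t ∈ Icc 1 n, (M.deaths (t - 1) ω : ℝ)) =
      ∑ t ∈ Icc 1 n, ENNReal.ofReal (1 / n) * (M.deaths (t - 1) ω : ℝ≥0∞) := by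
    rw [ENNReal.ofReal_mul (by positivity),
      ENNReal.ofReal_sum_of_nonneg fun t _ => by positivity, mul_sum]
    simp_rw [ENNReal.ofReal_natCast]
  simp_rw [hpt]
  rw [lintegral_finsetSum _ fun t _ => (hmeas (t - 1)).const_mul _]
  simp_rw [lintegral_const_mul _ (hmeas _)]
  calc ∑ t ∈ Icc 1 n, ENNReal.ofReal (1 / n) * ∫⁻ ω, (M.deaths (t - 1) ω : ℝ≥0∞) ∂P
      ≤ ∑ t ∈ Icc 1 n, ENNReal.ofReal (1 / n) * ENNReal.ofReal ((1 - θ) * (n * μG)) := by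
        gcongr with t ht
        refine (M.lintegral_deaths_le hμ hθ (t - 1)).trans (ENNReal.ofReal_le_ofReal ?_)
        have : ((t - 1 : ℕ) : ℝ) ≤ n := by
          exact_mod_cast (Nat.sub_le t 1).trans (mem_Icc.mp ht).2
        gcongr
    _ = ENNReal.ofReal ((1 - θ) * (n * μG)) := by
        rw [sum_const, Nat.card_Icc, add_tsub_cancel_right, nsmul_eq_mul,
          ← ENNReal.ofReal_mul (by positivity), ← ENNReal.ofReal_natCast, ← mul_assoc,
          ← ENNReal.ofReal_mul (by positivity)]
        rcases eq_or_ne (n : ℝ) 0 with hn | hn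
        · simp [hn]
        · field_simp

theorem measureReal_mean_deaths_ge_le [IsProbabilityMeasure P]
    (hμ : HasSum (fun k : ℕ => (k : ℝ) * (G k).toReal) μG) (hθ : θ ≤ 1) (n : ℕ) {c : ℝ}
    (hc : 0 < c) :
    P.real {ω | c ≤ 1 / (n : ℝ) * ∑ t ∈ Icc 1 n, (M.deaths (t - 1) ω : ℝ)} ≤
      (1 - θ) * (n * μG) / c := by
  have hμG : 0 ≤ μG := hμ.nonneg fun k => by positivity
  have hθ' : 0 ≤ 1 - θ := by linarith
  refine measureReal_ge_le_div_of_lintegral_le ?_ (by positivity) hc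
    (M.lintegral_mean_deaths_le hμ hθ n)
  exact ((Finset.measurable_sum _ fun t _ =>
    measurable_from_top.comp (M.measurable_deaths (t - 1))).const_mul _).aemeasurable

end INAR

theorem inar_estimate_g0_general
    {Ω : ℕ → Type} [∀ n, MeasurableSpace (Ω n)] (P : ∀ n, Measure (Ω n))
    [∀ n, IsProbabilityMeasure (P n)] (h : ℝ) (hh : 0 ≤ h) (G : PMF ℕ)
    (M : ∀ n, INAR (P n) (1 - h / (n : ℝ) ^ 2) G) (μG : ℝ)
    (hμ : HasSum (fun k : ℕ => (k : ℝ) * (G k).toReal) μG) :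
    ∀ δ : ℝ, 0 < δ →
      Filter.Tendsto
        (fun n : ℕ =>
          ((P n) {ω | δ ≤
            |(1 / (n : ℝ)) * (∑ t ∈ Finset.Icc 1 n,
                if (M n).X t ω = (M n).X (t - 1) ω then (1 : ℝ) else 0) -
              (G 0).toReal|}).toReal)
        Filter.atTop (nhds 0) := by
  intro δ hδ
  refine squeeze_zero' (Eventually.of_forall fun n => measureReal_nonneg) ?_
    (tendsto_const_div_atTop_nhds_zero_nat (1 / δ ^ 2 + 2 * h * μG / δ))
  filter_upwards [eventually_ge_atTop 1] with n hn
  have hθ : 1 - h / (n : ℝ) ^ 2 ≤ 1 := by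
    have : 0 ≤ h / (n : ℝ) ^ 2 := by positivity
    linarith
  calc (P n).real _
      ≤ (P n).real {ω | δ / 2 ≤ |1 / (n : ℝ) * ∑ t ∈ Icc 1 n,
            (if (M n).ε t ω = 0 then (1 : ℝ) else 0) - (G 0).toReal|} +
        (P n).real {ω | δ / 2 ≤ 1 / (n : ℝ) * ∑ t ∈ Icc 1 n, ((M n).deaths (t - 1) ω : ℝ)} :=
        measureReal_abs_sub_ge_le_add ((M n).abs_mean_sub_mean_le_mean_deaths n) _ δ
    _ ≤ 1 / (4 * n * (δ / 2) ^ 2) + (1 - (1 - h / (n : ℝ) ^ 2)) * (n * μG) / (δ / 2) :=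
        add_le_add ((M n).measureReal_abs_mean_innovation_zero_sub_ge_le hn (by positivity))
          ((M n).measureReal_mean_deaths_ge_le hμ hθ n (by positivity))
    _ = (1 / δ ^ 2 + 2 * h * μG / δ) / n := by
        field_simp
        ring

/-- Consistent estimation of `g(0)` in the nearly unstable INAR(1) model:
`ĝ_n(0) = n⁻¹ ∑_{t=1}^n 1{X_t = X_{t-1}} → g(0)` in probability under
`P_{1-h/n²}`. -/
theorem inar_estimate_g0
    {Ω : ℕ → Type} [∀ n, MeasurableSpace (Ω n)] (P : ∀ n, Measure (Ω n))
    [∀ n, IsProbabilityMeasure (P n)] (h : ℝ) (hh : 0 ≤ h) (G : PMF ℕ)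
    (M : ∀ n, INAR (P n) (1 - h / (n : ℝ) ^ 2) G) (μG σ2 : ℝ)
    (hμ : HasSum (fun k : ℕ => (k : ℝ) * (G k).toReal) μG)
    (hσ : HasSum (fun k : ℕ => ((k : ℝ) - μG) ^ 2 * (G k).toReal) σ2) :
    ∀ δ : ℝ, 0 < δ →
      Filter.Tendsto
        (fun n : ℕ =>
          ((P n) {ω | δ ≤
            |(1 / (n : ℝ)) * (∑ t ∈ Finset.Icc 1 n,
                if (M n).X t ω = (M n).X (t - 1) ω then (1 : ℝ) else 0) -
              (G 0).toReal|}).toReal)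
        Filter.atTop (nhds 0) :=
  inar_estimate_g0_general P h hh G M μG hμ
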